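/- arXiv:0810.2012 — 2 statements merged into one kernel-verified Lean document; each statement's English description precedes it below -/
import Mathlib

section
/- Let T_n denote the n-th Chebyshev polynomial of the first kind and suppose 4 divides n. Then for every real x with |x| ≤ 1/(2n), one has 1 − 2n²x² ≤ T_n(x) ≤ 1 − (n²/4)x². -/
/-!
Write `x = sin s` with `s = arcsin x`. Since `4 ∣ n`, `T_n(x) = cos (n (π/2 - s)) = cos (n s)`.
Jordan's inequality gives `|x| ≤ |s| ≤ (π/2) |x|`, so `t = n s` satisfies `n |x| ≤ |t| ≤ 2 n |x| ≤ 1`,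
and the claim follows from `1 - t²/2 ≤ cos t ≤ 1 - t²/4` for `|t| ≤ 1`.
-/

open Polynomial Real

namespace Real

theorem abs_le_abs_arcsin {x : ℝ} (hx₁ : -1 ≤ x) (hx₂ : x ≤ 1) : |x| ≤ |arcsin x| := by
  simpa only [sin_arcsin hx₁ hx₂] using abs_sin_le_abs (x := arcsin x)

theorem abs_arcsin_le_pi_div_two_mul_abs (x : ℝ) : |arcsin x| ≤ π / 2 * |x| := by
  have hs : |arcsin x| ≤ π / 2 := abs_le.2 ⟨neg_pi_div_two_le_arcsin x, arcsin_le_pi_div_two x⟩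
  rcases le_or_gt |x| 1 with hx | hx
  · obtain ⟨hx₁, hx₂⟩ := abs_le.1 hx
    have hJordan := mul_abs_le_abs_sin hs
    rw [sin_arcsin hx₁ hx₂] at hJordan
    rw [div_mul_eq_mul_div, div_le_iff₀ pi_pos] at hJordan
    linarith
  · nlinarith [pi_pos]

theorem cos_le_one_sub_sq_div_four {t : ℝ} (ht : |t| ≤ 1) : cos t ≤ 1 - t ^ 2 / 4 := by
  have hTaylor := (abs_le.1 (cos_bound ht)).2
  have ht2 : t ^ 2 ≤ 1 := (sq_le_one_iff_abs_le_one t).2 ht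
  have ht4 : |t| ^ 4 = (t ^ 2) ^ 2 := by rw [← sq_abs t]; ring
  nlinarith [sq_nonneg t]

end Real

namespace Polynomial.Chebyshev

theorem T_real_eval_eq_cos_mul_arcsin {n : ℤ} (hn : 4 ∣ n) {x : ℝ} (hx₁ : -1 ≤ x) (hx₂ : x ≤ 1) :
    (T ℝ n).eval x = cos (n * arcsin x) := by
  obtain ⟨k, rfl⟩ := hn
  have hx : cos (π / 2 - arcsin x) = x := by rw [cos_pi_div_two_sub, sin_arcsin hx₁ hx₂]
  have harg : ((4 * k : ℤ) : ℝ) * (π / 2 - arcsin x) = k * (2 * π) - (4 * k : ℤ) * arcsin x := by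
    push_cast; ring
  conv_lhs => rw [← hx, T_real_cos, harg, cos_int_mul_two_pi_sub]

end Polynomial.Chebyshev

/-- If `4 ∣ n` and `|x| ≤ 1/(2n)` then `1 - 2n²x² ≤ T_n(x) ≤ 1 - (n²/4)x²`. -/
theorem chebyshev_near_one (n : ℕ) (hn : 4 ∣ n) (x : ℝ) (hx : |x| ≤ 1 / (2 * n)) :
    1 - 2 * (n : ℝ) ^ 2 * x ^ 2 ≤ (Polynomial.Chebyshev.T ℝ n).eval x ∧
      (Polynomial.Chebyshev.T ℝ n).eval x ≤ 1 - (n : ℝ) ^ 2 / 4 * x ^ 2 := by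
  rcases eq_or_ne n 0 with rfl | hn0
  · simp
  have hn1 : (1 : ℝ) ≤ n := by exact_mod_cast Nat.one_le_iff_ne_zero.2 hn0
  have hnx : 2 * n * |x| ≤ 1 := (le_div_iff₀' (by positivity)).1 hx
  obtain ⟨hx₁, hx₂⟩ := abs_le.1 (show |x| ≤ 1 by nlinarith [abs_nonneg x])
  rw [Chebyshev.T_real_eval_eq_cos_mul_arcsin (Int.natCast_dvd_natCast.2 hn) hx₁ hx₂,
    Int.cast_natCast]
  set t := (n : ℝ) * arcsin x
  have ht_abs : |t| = n * |arcsin x| := by rw [abs_mul, Nat.abs_cast]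
  have ht_lower : n * |x| ≤ |t| :=
    ht_abs ▸ mul_le_mul_of_nonneg_left (abs_le_abs_arcsin hx₁ hx₂) n.cast_nonneg
  have ht_upper : |t| ≤ 2 * n * |x| := by
    have hs : |arcsin x| ≤ 2 * |x| := (abs_arcsin_le_pi_div_two_mul_abs x).trans <|
      mul_le_mul_of_nonneg_right (by linarith [pi_le_four]) (abs_nonneg x)
    rw [ht_abs]; nlinarith
  have hsq_lower : (n : ℝ) ^ 2 * x ^ 2 ≤ t ^ 2 := by
    rw [← sq_abs t, ← sq_abs x, ← mul_pow]; gcongr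
  have hsq_upper : t ^ 2 ≤ 4 * (n : ℝ) ^ 2 * x ^ 2 := by
    rw [← sq_abs t, ← sq_abs x]; nlinarith [abs_nonneg t]
  constructor
  · linarith [one_sub_sq_div_two_le_cos (x := t)]
  · linarith [cos_le_one_sub_sq_div_four (ht_upper.trans hnx)]
end

section
/- The Gaussian functions f(x) = e^{−Kx²} (K > 0) are very rapidly decreasing: every smooth compactly supported function g : ℝ → ℝ is a uniform limit on ℝ of functions of the form e^{−Kx²}·P(x) with P a polynomial. -/
open Real Polynomial

/-- A function `f : ℝ → ℝ` is *very rapidly decreasing* (VRD) if every smooth compactly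
supported function is a uniform limit on `ℝ` of functions of the form `f * P` with `P` a
polynomial. -/
def IsVRD (f : ℝ → ℝ) : Prop :=
  ∀ g : ℝ → ℝ, ContDiff ℝ (⊤ : ℕ∞) g → HasCompactSupport g →
    ∀ ε : ℝ, 0 < ε → ∃ P : Polynomial ℝ, ∀ x : ℝ, |f x * P.eval x - g x| ≤ ε

section Helpers
open Finset Nat

lemma sum_deriv (m : ℕ) (t : ℝ) :
    HasDerivAt (fun s : ℝ => ∑ j ∈ Finset.range (m+1), (-s)^j / (j ! : ℝ))
      (-∑ j ∈ Finset.range m, (-t)^j / (j ! : ℝ)) t := by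
  have h : ∀ j : ℕ, HasDerivAt (fun s : ℝ => (-s)^j / (j ! : ℝ))
      ((j : ℝ) * (-t)^(j-1) * (-1) / (j ! : ℝ)) t := by
    intro j
    have h1 : HasDerivAt (fun s : ℝ => (-s)) (-1) t := (hasDerivAt_id t).neg
    have := (hasDerivAt_pow j (-t)).comp t h1
    exact this.div_const _
  have H := HasDerivAt.fun_sum (fun j (_ : j ∈ Finset.range (m+1)) => h j)
  refine H.congr_deriv (Eq.symm ?_)
  rw [Finset.sum_range_succ']
  have h0 : ((0:ℕ) : ℝ) * (-t)^(0-1) * (-1) / ((0:ℕ)! : ℝ) = 0 := by norm_num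
  rw [h0, add_zero, eq_comm]
  rw [← Finset.sum_neg_distrib]
  apply Finset.sum_congr rfl
  intro i _
  have h2 : ((i ! : ℝ)) ≠ 0 := by positivity
  have h3 : (((i+1) ! : ℝ)) = ((i:ℝ)+1) * (i ! : ℝ) := by
    rw [Nat.factorial_succ]; push_cast; ring
  simp only [Nat.add_sub_cancel, h3]
  field_simp
  push_cast
  ring

lemma sum_at_zero (m : ℕ) : ∑ j ∈ Finset.range (m+1), (-(0:ℝ))^j / (j ! : ℝ) = 1 := by
  rw [Finset.sum_eq_single 0]
  · norm_num
  · intro b _ hb; rw [neg_zero, zero_pow hb, zero_div]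
  · intro h; simp at h

lemma exp_taylor : ∀ (n : ℕ) (t : ℝ), 0 ≤ t →
    |Real.exp (-t) - ∑ j ∈ Finset.range (n+1), (-t)^j / (j ! : ℝ)| ≤ t^(n+1) / ((n+1)! : ℝ) := by
  intro n
  induction n with
  | zero =>
    intro t ht
    have h1 : Real.exp (-t) ≤ 1 := by
      rw [show (1:ℝ) = Real.exp 0 by simp]
      exact Real.exp_le_exp.mpr (by linarith)
    have h2 : 1 - t ≤ Real.exp (-t) := by
      have := Real.add_one_le_exp (-t); linarith
    have hs : ∑ j ∈ Finset.range (0+1), (-t)^j / (j ! : ℝ) = 1 := by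
      simp
    rw [hs, abs_le]
    norm_num
    constructor <;> linarith
  | succ n ih =>
    intro t ht
    set F : ℝ → ℝ := fun s => Real.exp (-s) - ∑ j ∈ Finset.range (n+2), (-s)^j / (j ! : ℝ) with hF
    have hFd : ∀ s : ℝ, HasDerivAt F
        (-(Real.exp (-s) - ∑ j ∈ Finset.range (n+1), (-s)^j / (j ! : ℝ))) s := by
      intro s
      have h1 : HasDerivAt (fun s : ℝ => Real.exp (-s)) (-Real.exp (-s)) s := by
        have := (Real.hasDerivAt_exp (-s)).comp s ((hasDerivAt_id s).neg)
        simpa [Function.comp_def] using this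
      have h2 := sum_deriv (n+1) s
      have := h1.sub h2
      exact this.congr_deriv (by ring)
    have hF0 : F 0 = 0 := by
      rw [hF]
      show Real.exp (-(0:ℝ)) - ∑ j ∈ Finset.range ((n+1)+1), (-(0:ℝ))^j / (j ! : ℝ) = 0
      rw [sum_at_zero (n+1), neg_zero, Real.exp_zero]; ring
    -- upper bound: G := s^(n+2)/(n+2)! - F is monotone on [0,∞)
    have key : ∀ (σ : ℝ), σ = 1 ∨ σ = -1 → σ * F t ≤ t^(n+2) / ((n+2)! : ℝ) := by
      intro σ hσ
      set G : ℝ → ℝ := fun s => s^(n+2) / ((n+2)! : ℝ) - σ * F s with hG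
      have hGd : ∀ s : ℝ, HasDerivAt G
          (((n:ℝ)+2) * s^(n+1) / ((n+2)! : ℝ)
            + σ * (Real.exp (-s) - ∑ j ∈ Finset.range (n+1), (-s)^j / (j ! : ℝ))) s := by
        intro s
        have h1 : HasDerivAt (fun s : ℝ => s^(n+2) / ((n+2)! : ℝ))
            (((n:ℝ)+2) * s^(n+1) / ((n+2)! : ℝ)) s := by
          have := (hasDerivAt_pow (n+2) s).div_const ((n+2)! : ℝ)
          exact this.congr_deriv (by rw [show n+2-1 = n+1 by omega]; push_cast; ring)
        have := h1.sub ((hFd s).const_mul σ)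
        exact this.congr_deriv (by ring)
      have mono : MonotoneOn G (Set.Ici 0) := by
        apply monotoneOn_of_deriv_nonneg (convex_Ici 0)
          (fun s _ => (hGd s).continuousAt.continuousWithinAt)
          (fun s _ => ((hGd s).differentiableAt).differentiableWithinAt)
        intro s hs
        rw [interior_Ici] at hs
        rw [(hGd s).deriv]
        have hs0 : (0:ℝ) ≤ s := le_of_lt hs
        have hihs := ih s hs0
        have habs : |σ * (Real.exp (-s) - ∑ j ∈ Finset.range (n+1), (-s)^j / (j ! : ℝ))|
            ≤ s^(n+1) / ((n+1)! : ℝ) := by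
          rcases hσ with rfl | rfl <;> simpa [abs_neg, abs_sub_comm] using hihs
        have h3 : -(s^(n+1) / ((n+1)! : ℝ))
            ≤ σ * (Real.exp (-s) - ∑ j ∈ Finset.range (n+1), (-s)^j / (j ! : ℝ)) :=
          neg_le_of_abs_le habs
        have h4 : s^(n+1) / ((n+1)! : ℝ) ≤ ((n:ℝ)+2) * s^(n+1) / ((n+2)! : ℝ) := by
          rw [show ((n+2)! : ℝ) = ((n:ℝ)+2) * ((n+1)! : ℝ) by
            rw [show n+2 = (n+1)+1 by ring, Nat.factorial_succ]; push_cast; ring]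
          rw [mul_div_mul_left]
          positivity
        linarith
      have := mono (Set.self_mem_Ici) (Set.mem_Ici.mpr ht) ht
      simp only [hG, hF0, mul_zero, sub_zero] at this
      have h0 : (0:ℝ)^(n+2) / ((n+2)! : ℝ) = 0 := by
        rw [zero_pow (by omega), zero_div]
      rw [h0] at this
      linarith
    have k1 := key 1 (Or.inl rfl)
    have k2 := key (-1) (Or.inr rfl)
    show |F t| ≤ t^(n+2)/((n+2)! : ℝ)
    exact abs_le.mpr ⟨by linarith, by linarith⟩

lemma pow_mul_exp_neg_le (m : ℕ) {c u : ℝ} (hc : 0 < c) (hu : 0 ≤ u) :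
    u^m * Real.exp (-(c*u)) ≤ (m ! : ℝ) / c^m := by
  have hm : (0:ℝ) < (m ! : ℝ) := by positivity
  have h1 : (c*u)^m / (m ! : ℝ) ≤ Real.exp (c*u) := by
    calc (c*u)^m / (m ! : ℝ)
        ≤ ∑ i ∈ Finset.range (m+1), (c*u)^i / (i ! : ℝ) := by
          apply Finset.single_le_sum (f := fun i => (c*u)^i / (i ! : ℝ))
            (fun i _ => by positivity) (Finset.self_mem_range_succ m)
      _ ≤ Real.exp (c*u) := Real.sum_le_exp_of_nonneg (by positivity) _
  have h2 : (c*u)^m ≤ (m ! : ℝ) * Real.exp (c*u) := by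
    rw [div_le_iff₀ hm] at h1; linarith
  rw [le_div_iff₀ (pow_pos hc m)]
  calc u^m * Real.exp (-(c*u)) * c^m
      = (c*u)^m * Real.exp (-(c*u)) := by rw [mul_pow]; ring
    _ ≤ ((m ! : ℝ) * Real.exp (c*u)) * Real.exp (-(c*u)) :=
        mul_le_mul_of_nonneg_right h2 (le_of_lt (Real.exp_pos _))
    _ = (m ! : ℝ) := by rw [mul_assoc, ← Real.exp_add]; simp

lemma keyA {c a : ℝ} (ha : 0 < a) (hac : a < c) (Q : Polynomial ℝ) {ε : ℝ} (hε : 0 < ε) :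
    ∃ P : Polynomial ℝ, ∀ x : ℝ,
      |Real.exp (-c*x^2) * P.eval x - Real.exp (-(c+a)*x^2) * Q.eval x| ≤ ε := by
  have hc : 0 < c := lt_trans ha hac
  set d := Q.natDegree with hd
  set M := ∑ i ∈ Finset.range (d+1), |Q.coeff i| with hM
  have hM0 : 0 ≤ M := Finset.sum_nonneg fun i _ => abs_nonneg _
  have hQbound : ∀ x : ℝ, |Q.eval x| ≤ M * (1+x^2)^d := by
    intro x
    rw [Polynomial.eval_eq_sum_range]
    calc |∑ i ∈ Finset.range (d+1), Q.coeff i * x^i|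
        ≤ ∑ i ∈ Finset.range (d+1), |Q.coeff i * x^i| := Finset.abs_sum_le_sum_abs _ _
      _ ≤ ∑ i ∈ Finset.range (d+1), |Q.coeff i| * (1+x^2)^d := by
          apply Finset.sum_le_sum
          intro i hi
          rw [abs_mul, abs_pow]
          apply mul_le_mul_of_nonneg_left _ (abs_nonneg _)
          calc |x|^i ≤ (1+x^2)^i := by
                apply pow_le_pow_left₀ (abs_nonneg _)
                nlinarith [sq_abs x, sq_nonneg (|x| - 1)]
            _ ≤ (1+x^2)^d := by
                apply pow_le_pow_right₀ (by nlinarith [sq_nonneg x])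
                exact Nat.lt_succ_iff.mp (Finset.mem_range.mp hi)
      _ = M * (1+x^2)^d := by rw [← Finset.sum_mul]
  set c' := (a+c)/2 with hc'
  have hc'pos : 0 < c' := by rw [hc']; linarith
  have hac' : a < c' := by rw [hc']; linarith
  set b := (c-a)/2 with hb
  have hbpos : 0 < b := by rw [hb]; linarith
  have hbc : b + c' = c := by rw [hb, hc']; ring
  set C := (2:ℝ)^d * (1 + (d ! : ℝ)/b^d) with hC
  have hCpos : 0 < C := by
    apply mul_pos (by positivity)
    have : (0:ℝ) < (d ! : ℝ)/b^d := by positivity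
    linarith
  have hCbound : ∀ u : ℝ, 0 ≤ u → (1+u)^d * Real.exp (-(b*u)) ≤ C := by
    intro u hu
    have h1 : (1+u)^d ≤ 2^d * (1 + u^d) := by
      rcases le_total u 1 with h | h
      · calc (1+u)^d ≤ 2^d := by
              apply pow_le_pow_left₀ (by linarith) (by linarith)
          _ ≤ 2^d * (1 + u^d) := by
              nlinarith [pow_pos (show (0:ℝ) < 2 by norm_num) d, pow_nonneg hu d]
      · calc (1+u)^d ≤ (2*u)^d := by
              apply pow_le_pow_left₀ (by linarith) (by linarith)
          _ = 2^d * u^d := mul_pow 2 u d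
          _ ≤ 2^d * (1 + u^d) := by
              nlinarith [pow_pos (show (0:ℝ) < 2 by norm_num) d]
    have h2 : (1 + u^d) * Real.exp (-(b*u)) ≤ 1 + (d ! : ℝ)/b^d := by
      have e1 : Real.exp (-(b*u)) ≤ 1 := by
        rw [show (1:ℝ) = Real.exp 0 by simp]
        exact Real.exp_le_exp.mpr (by nlinarith)
      have e2 := pow_mul_exp_neg_le d hbpos hu
      have e3 : (0:ℝ) < Real.exp (-(b*u)) := Real.exp_pos _
      nlinarith
    calc (1+u)^d * Real.exp (-(b*u))
        ≤ (2^d * (1 + u^d)) * Real.exp (-(b*u)) :=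
          mul_le_mul_of_nonneg_right h1 (le_of_lt (Real.exp_pos _))
      _ = 2^d * ((1 + u^d) * Real.exp (-(b*u))) := by ring
      _ ≤ 2^d * (1 + (d ! : ℝ)/b^d) := by
          apply mul_le_mul_of_nonneg_left h2 (by positivity)
  -- choose N
  set r := a / c' with hr
  have hr0 : 0 < r := by positivity
  have hr1 : r < 1 := by rw [hr, div_lt_one hc'pos]; exact hac'
  obtain ⟨N, hN⟩ := exists_pow_lt_of_lt_one (show (0:ℝ) < ε/(M*C+1) by positivity) hr1
  have hMCr : M * C * r^(N+1) ≤ ε := by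
    have h1 : r^(N+1) ≤ r^N := by
      apply pow_le_pow_of_le_one (le_of_lt hr0) (le_of_lt hr1)
      omega
    have h2 : M * C < M*C+1 := by linarith
    have h3 : 0 < M*C+1 := by positivity
    have h4 : r^(N+1) < ε/(M*C+1) := lt_of_le_of_lt h1 hN
    calc M * C * r^(N+1) ≤ (M*C+1) * r^(N+1) := by
          apply mul_le_mul_of_nonneg_right (by linarith) (by positivity)
      _ ≤ (M*C+1) * (ε/(M*C+1)) := by
          apply mul_le_mul_of_nonneg_left (le_of_lt h4) (by linarith)
      _ = ε := by field_simp
  -- the polynomial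
  set SN : Polynomial ℝ := ∑ j ∈ Finset.range (N+1),
    Polynomial.C ((-a)^j / (j ! : ℝ)) * Polynomial.X^(2*j) with hSN
  refine ⟨Q * SN, fun x => ?_⟩
  have hSNeval : SN.eval x = ∑ j ∈ Finset.range (N+1), (-(a*x^2))^j / (j ! : ℝ) := by
    rw [hSN, Polynomial.eval_finset_sum]
    apply Finset.sum_congr rfl
    intro j _
    rw [Polynomial.eval_mul, Polynomial.eval_C, Polynomial.eval_pow, Polynomial.eval_X]
    rw [pow_mul, show (-(a*x^2))^j = (-a)^j * (x^2)^j by rw [← mul_pow]; ring_nf]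
    ring
  set u := x^2 with hu
  have hu0 : (0:ℝ) ≤ u := sq_nonneg x
  have hTay : |SN.eval x - Real.exp (-(a*u))| ≤ (a*u)^(N+1) / ((N+1)! : ℝ) := by
    rw [hSNeval, abs_sub_comm]
    exact exp_taylor N (a*u) (by positivity)
  have hsplit : Real.exp (-c*x^2) * (Q * SN).eval x - Real.exp (-(c+a)*x^2) * Q.eval x
      = (Real.exp (-(c*u)) * Q.eval x) * (SN.eval x - Real.exp (-(a*u))) := by
    rw [Polynomial.eval_mul]
    rw [show Real.exp (-(c+a)*x^2) = Real.exp (-(c*u)) * Real.exp (-(a*u)) by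
      rw [← Real.exp_add]; congr 1; rw [hu]; ring]
    rw [show Real.exp (-c*x^2) = Real.exp (-(c*u)) by congr 1; rw [hu]; ring]
    ring
  rw [hsplit, abs_mul, abs_mul, Real.abs_exp]
  have hQb : |Q.eval x| ≤ M * (1+u)^d := by rw [hu]; exact hQbound x
  clear_value M c' b C r u
  have hexpsplit : Real.exp (-(c*u)) = Real.exp (-(b*u)) * Real.exp (-(c'*u)) := by
    rw [← Real.exp_add, ← hbc]; congr 1; ring
  calc Real.exp (-(c*u)) * |Q.eval x| * |SN.eval x - Real.exp (-(a*u))|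
      ≤ Real.exp (-(c*u)) * (M * (1+u)^d) * ((a*u)^(N+1) / ((N+1)! : ℝ)) := by
        apply mul_le_mul
        · exact mul_le_mul_of_nonneg_left hQb (le_of_lt (Real.exp_pos _))
        · exact hTay
        · exact abs_nonneg _
        · positivity
    _ = ((1+u)^d * Real.exp (-(b*u))) * (u^(N+1) * Real.exp (-(c'*u)))
        * (M * a^(N+1) / ((N+1)! : ℝ)) := by
        rw [hexpsplit, mul_pow]; ring
    _ ≤ C * (((N+1)! : ℝ)/c'^(N+1)) * (M * a^(N+1) / ((N+1)! : ℝ)) := by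
        apply mul_le_mul_of_nonneg_right _ (by positivity)
        apply mul_le_mul (hCbound u hu0) (pow_mul_exp_neg_le (N+1) hc'pos hu0)
          (by positivity) (le_of_lt hCpos)
    _ = M * C * r^(N+1) := by
        rw [hr, div_pow]
        have h1 : ((N+1)! : ℝ) ≠ 0 := by positivity
        have h2 : c'^(N+1) ≠ 0 := by positivity
        field_simp
    _ ≤ ε := hMCr

def Reach (c b : ℝ) : Prop :=
  ∀ Q : Polynomial ℝ, ∀ ε : ℝ, 0 < ε → ∃ P : Polynomial ℝ, ∀ x : ℝ,
    |Real.exp (-c*x^2) * P.eval x - Real.exp (-b*x^2) * Q.eval x| ≤ ε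

lemma reach_refl (c : ℝ) : Reach c c :=
  fun Q ε hε => ⟨Q, fun x => by rw [sub_self, abs_zero]; exact le_of_lt hε⟩

lemma reach_trans {c₁ c₂ c₃ : ℝ} (h12 : Reach c₁ c₂) (h23 : Reach c₂ c₃) : Reach c₁ c₃ := by
  intro Q ε hε
  obtain ⟨P₂, hP₂⟩ := h23 Q (ε/2) (by linarith)
  obtain ⟨P₁, hP₁⟩ := h12 P₂ (ε/2) (by linarith)
  refine ⟨P₁, fun x => ?_⟩
  calc |Real.exp (-c₁*x^2) * P₁.eval x - Real.exp (-c₃*x^2) * Q.eval x|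
      ≤ |Real.exp (-c₁*x^2) * P₁.eval x - Real.exp (-c₂*x^2) * P₂.eval x|
        + |Real.exp (-c₂*x^2) * P₂.eval x - Real.exp (-c₃*x^2) * Q.eval x| := abs_sub_le _ _ _
    _ ≤ ε/2 + ε/2 := add_le_add (hP₁ x) (hP₂ x)
    _ = ε := by ring

lemma reach_step {c a : ℝ} (ha : 0 < a) (hac : a < c) : Reach c (c+a) := by
  intro Q ε hε
  obtain ⟨P, hP⟩ := keyA ha hac Q hε
  exact ⟨P, hP⟩

lemma reach_chain {K : ℝ} (hK : 0 < K) : ∀ n : ℕ, Reach K (K + n*(K/2)) := by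
  intro n
  induction n with
  | zero => simpa using reach_refl K
  | succ n ih =>
    have step : Reach (K + n*(K/2)) (K + (n+1:ℕ)*(K/2)) := by
      have h := reach_step (a := K/2) (c := K + n*(K/2)) (by linarith)
        (by have : (0:ℝ) ≤ (n:ℝ)*(K/2) := by positivity
            linarith)
      have e : K + n*(K/2) + K/2 = K + ((n+1:ℕ):ℝ)*(K/2) := by push_cast; ring
      rwa [e] at h
    exact reach_trans ih step

lemma reach_mul {K : ℝ} (hK : 0 < K) (j : ℕ) : Reach K (((j:ℝ)+1)*K) := by
  have h := reach_chain hK (2*j)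
  have e : K + ((2*j:ℕ):ℝ)*(K/2) = ((j:ℝ)+1)*K := by push_cast; ring
  rwa [e] at h

def Apx (K : ℝ) : Set (ℝ → ℝ) :=
  {f | ∀ ε : ℝ, 0 < ε → ∃ P : Polynomial ℝ, ∀ x : ℝ,
    |Real.exp (-K*x^2) * P.eval x - f x| ≤ ε}

lemma apx_of_reach {K b : ℝ} (h : Reach K b) (Q : Polynomial ℝ) :
    (fun x => Real.exp (-b*x^2) * Q.eval x) ∈ Apx K :=
  fun ε hε => h Q ε hε

lemma apx_sum {K : ℝ} {ι : Type*} (s : Finset ι) (F : ι → ℝ → ℝ)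
    (h : ∀ i ∈ s, F i ∈ Apx K) : (fun x => ∑ i ∈ s, F i x) ∈ Apx K := by
  classical
  induction s using Finset.induction with
  | empty =>
    intro ε hε
    exact ⟨0, fun x => by simp; exact le_of_lt hε⟩
  | insert i s' hi ih =>
    intro ε hε
    obtain ⟨P₁, hP₁⟩ := h i (Finset.mem_insert_self i s') (ε/2) (by linarith)
    obtain ⟨P₂, hP₂⟩ := ih (fun j hj => h j (Finset.mem_insert_of_mem hj)) (ε/2) (by linarith)
    refine ⟨P₁ + P₂, fun x => ?_⟩
    simp only []
    rw [Finset.sum_insert hi]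
    have e : Real.exp (-K*x^2) * (P₁+P₂).eval x - (F i x + ∑ j ∈ s', F j x)
        = (Real.exp (-K*x^2) * P₁.eval x - F i x)
          + (Real.exp (-K*x^2) * P₂.eval x - ∑ j ∈ s', F j x) := by
      rw [Polynomial.eval_add]; ring
    rw [e]
    calc _ ≤ |Real.exp (-K*x^2) * P₁.eval x - F i x|
          + |Real.exp (-K*x^2) * P₂.eval x - ∑ j ∈ s', F j x| := abs_add_le _ _
      _ ≤ ε/2 + ε/2 := add_le_add (hP₁ x) (hP₂ x)
      _ = ε := by ring

lemma apx_congr {K : ℝ} {f g : ℝ → ℝ} (h : ∀ x, f x = g x) (hf : f ∈ Apx K) : g ∈ Apx K := by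
  intro ε hε
  obtain ⟨P, hP⟩ := hf ε hε
  exact ⟨P, fun x => by rw [← h x]; exact hP x⟩

lemma substW {K : ℝ} (hK : 0 < K) (G : ℝ → ℝ) (hG : Continuous G) (T : ℝ)
    (hT : ∀ t, T ≤ t → G t = 0) {ε : ℝ} (hε : 0 < ε) :
    ∃ q : Polynomial ℝ, ∀ t : ℝ, 0 ≤ t →
      |Real.exp (-(K*t)) * q.eval (Real.exp (-(K*t))) - G t| ≤ ε * Real.exp (-(K*t)) := by
  set T' := max T 0 with hT'
  set s₀ := Real.exp (-(K*T')) with hs₀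
  set s₁ := Real.exp (-(K*T') - 1) with hs₁
  have hs₁pos : 0 < s₁ := Real.exp_pos _
  have h₁₀ : s₁ < s₀ := by rw [hs₁, hs₀]; apply Real.exp_lt_exp.mpr; linarith
  set F : ℝ → ℝ := fun s => if s ≤ s₁ then 0 else G (-Real.log s / K) / s with hF
  have hFvanish : ∀ s : ℝ, s < s₀ → F s = 0 := by
    intro s hs
    by_cases h : s ≤ s₁
    · simp [hF, h]
    · push_neg at h
      have hspos : 0 < s := lt_trans hs₁pos h
      have hlog : Real.log s < -(K*T') := by
        have := Real.log_lt_log hspos hs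
        rwa [hs₀, Real.log_exp] at this
      have hGt : G (-Real.log s / K) = 0 := by
        apply hT
        rw [le_div_iff₀ hK]
        have hTT' : T ≤ T' := le_max_left _ _
        nlinarith
      simp [hF, not_le.mpr h, hGt]
  have hFcont : Continuous F := by
    rw [continuous_iff_continuousAt]
    intro s
    rcases lt_or_ge s s₀ with h | h
    · apply ContinuousAt.congr (continuousAt_const (y := (0:ℝ)))
      have hmem : Set.Iio s₀ ∈ nhds s := Iio_mem_nhds h
      filter_upwards [hmem] with y hy
      exact (hFvanish y hy).symm
    · have hspos : 0 < s := lt_of_lt_of_le (Real.exp_pos _) h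
      have hform : ContinuousAt (fun y : ℝ => G (-Real.log y / K) / y) s := by
        apply ContinuousAt.div
        · exact hG.continuousAt.comp
            (((Real.continuousAt_log (ne_of_gt hspos)).neg).div_const K)
        · exact continuousAt_id
        · exact ne_of_gt hspos
      apply ContinuousAt.congr hform
      have hmem : Set.Ioi s₁ ∈ nhds s := Ioi_mem_nhds (lt_of_lt_of_le h₁₀ h)
      filter_upwards [hmem] with y hy
      simp [hF, not_le.mpr (Set.mem_Ioi.mp hy)]
  obtain ⟨q, hq⟩ := exists_polynomial_near_of_continuousOn 0 1 F hFcont.continuousOn ε hε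
  refine ⟨q, fun t ht => ?_⟩
  set s := Real.exp (-(K*t)) with hs
  have hspos : 0 < s := Real.exp_pos _
  have hsle : s ≤ 1 := by
    rw [hs, Real.exp_le_one_iff]
    nlinarith
  have hFs : s * F s = G t := by
    by_cases hcase : s ≤ s₁
    · have h1 : F s = 0 := by simp [hF, hcase]
      have h2 : G t = 0 := by
        apply hT
        have hlt : s < s₀ := lt_of_le_of_lt hcase h₁₀
        rw [hs, hs₀] at hlt
        have := Real.exp_lt_exp.mp hlt
        have hTT' : T ≤ T' := le_max_left _ _
        nlinarith
      rw [h1, h2, mul_zero]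
    · push_neg at hcase
      have h1 : F s = G (-Real.log s / K) / s := by simp [hF, not_le.mpr hcase]
      have h2 : -Real.log s / K = t := by
        rw [hs, Real.log_exp]; field_simp
      rw [h1, h2]; field_simp
  have hqs := hq s ⟨le_of_lt hspos, hsle⟩
  calc |s * q.eval s - G t| = |s * q.eval s - s * F s| := by rw [hFs]
    _ = s * |q.eval s - F s| := by rw [← mul_sub, abs_mul, abs_of_pos hspos]
    _ ≤ s * ε := mul_le_mul_of_nonneg_left (le_of_lt hqs) (le_of_lt hspos)
    _ = ε * s := mul_comm _ _

lemma apx_add {K : ℝ} {f g : ℝ → ℝ} (hf : f ∈ Apx K) (hg : g ∈ Apx K) :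
    (fun x => f x + g x) ∈ Apx K := by
  intro ε hε
  obtain ⟨P₁, hP₁⟩ := hf (ε/2) (by linarith)
  obtain ⟨P₂, hP₂⟩ := hg (ε/2) (by linarith)
  refine ⟨P₁ + P₂, fun x => ?_⟩
  have e : Real.exp (-K*x^2) * (P₁+P₂).eval x - (f x + g x)
      = (Real.exp (-K*x^2) * P₁.eval x - f x) + (Real.exp (-K*x^2) * P₂.eval x - g x) := by
    rw [Polynomial.eval_add]; ring
  simp only []
  rw [e]
  calc _ ≤ |Real.exp (-K*x^2) * P₁.eval x - f x| + |Real.exp (-K*x^2) * P₂.eval x - g x| :=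
        abs_add_le _ _
    _ ≤ ε/2 + ε/2 := add_le_add (hP₁ x) (hP₂ x)
    _ = ε := by ring

lemma apx_weighted {K : ℝ} (hK : 0 < K) (q W : Polynomial ℝ) :
    (fun x => Real.exp (-(K*x^2)) * q.eval (Real.exp (-(K*x^2))) * W.eval x) ∈ Apx K := by
  set F : ℕ → ℝ → ℝ := fun j x => Real.exp (-(((j:ℝ)+1)*K)*x^2)
    * ((Polynomial.C (q.coeff j) * W).eval x) with hFdef
  have hmem : ∀ j ∈ Finset.range (q.natDegree+1), F j ∈ Apx K :=
    fun j _ => apx_of_reach (reach_mul hK j) _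
  have hsum := apx_sum (Finset.range (q.natDegree+1)) F hmem
  apply apx_congr _ hsum
  intro x
  simp only [hFdef]
  rw [Polynomial.eval_eq_sum_range (x := Real.exp (-(K*x^2)))]
  rw [Finset.mul_sum, Finset.sum_mul]
  apply Finset.sum_congr rfl
  intro j _
  rw [Polynomial.eval_mul, Polynomial.eval_C]
  have h1 : Real.exp (-(K*x^2)) * (Real.exp (-(K*x^2)))^j
      = Real.exp (-(((j:ℝ)+1)*K)*x^2) := by
    rw [← Real.exp_nat_mul, ← Real.exp_add]
    congr 1
    push_cast; ring
  rw [← h1]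
  ring

end Helpers

/-- Gaussian functions are very rapidly decreasing. -/
theorem gaussian_isVRD (K : ℝ) (hK : 0 < K) :
    IsVRD fun x : ℝ => Real.exp (-K * x ^ 2) := by
  intro g hg hsupp ε hε
  have gcont : Continuous g := hg.continuous
  obtain ⟨R, hRpos, hR⟩ := hsupp.exists_pos_le_norm
  have hgvanish : ∀ x : ℝ, R ≤ |x| → g x = 0 := fun x hx => hR x (by rwa [Real.norm_eq_abs])
  set ge : ℝ → ℝ := fun x => (g x + g (-x))/2 with hge
  set go : ℝ → ℝ := fun x => (g x - g (-x))/2 with hgo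
  have gecont : Continuous ge := (gcont.add (gcont.comp continuous_neg)).div_const 2
  have gocont : Continuous go := (gcont.sub (gcont.comp continuous_neg)).div_const 2
  have hgevanish : ∀ x : ℝ, R ≤ |x| → ge x = 0 := by
    intro x hx
    have h1 := hgvanish x hx
    have h2 := hgvanish (-x) (by rwa [abs_neg])
    simp [hge, h1, h2]
  have hgovanish : ∀ x : ℝ, R ≤ |x| → go x = 0 := by
    intro x hx
    have h1 := hgvanish x hx
    have h2 := hgvanish (-x) (by rwa [abs_neg])
    simp [hgo, h1, h2]
  have hgo0 : go 0 = 0 := by simp [hgo]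
  have hgoodd : ∀ y : ℝ, go (-y) = - go y := by
    intro y; simp only [hgo]; rw [neg_neg]; ring
  have hgeeven : ∀ y : ℝ, ge (-y) = ge y := by
    intro y; simp only [hge]; rw [neg_neg]; ring
  have hgdiff : Differentiable ℝ g := hg.differentiable (by simp)
  have hgoderiv : HasDerivAt go (deriv g 0) 0 := by
    have h1 : HasDerivAt g (deriv g 0) 0 := (hgdiff 0).hasDerivAt
    have h1' : HasDerivAt g (deriv g 0) (-0 : ℝ) := by rwa [neg_zero]
    have h2 : HasDerivAt (fun x : ℝ => g (-x)) (deriv g 0 * (-1)) 0 :=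
      h1'.comp 0 ((hasDerivAt_id (0:ℝ)).neg)
    have h3 := (h1.sub h2).div_const 2
    have : HasDerivAt (fun x => (g x - g (-x))/2) ((deriv g 0 - deriv g 0 * (-1))/2) 0 := h3
    rw [hgo]
    convert this using 1
    ring
  set k : ℝ → ℝ := fun x => if x = 0 then deriv g 0 else go x / x with hk
  have hkcont : Continuous k := by
    rw [continuous_iff_continuousAt]
    intro x
    by_cases hx : x = 0
    · subst hx
      have hslope := hasDerivAt_iff_tendsto_slope.mp hgoderiv
      have htend : Filter.Tendsto k (nhdsWithin 0 {(0:ℝ)}ᶜ) (nhds (deriv g 0)) := by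
        apply Filter.Tendsto.congr' _ hslope
        filter_upwards [self_mem_nhdsWithin] with y hy
        have hy0 : y ≠ 0 := hy
        rw [slope_def_field, hgo0]
        simp [hk, hy0]
      have hk0 : k 0 = deriv g 0 := by simp [hk]
      unfold ContinuousAt
      rw [hk0, ← nhdsNE_sup_pure 0, Filter.tendsto_sup]
      refine ⟨htend, ?_⟩
      have := tendsto_pure_nhds k 0
      rwa [hk0] at this
    · apply ContinuousAt.congr ((gocont.continuousAt).div continuousAt_id hx)
      filter_upwards [compl_singleton_mem_nhds hx] with y hy
      have hy' : y ≠ 0 := hy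
      simp [hk, hy']
  set Ge : ℝ → ℝ := fun t => ge (Real.sqrt t) with hGe
  set Go : ℝ → ℝ := fun t => k (Real.sqrt t) with hGo
  have hGecont : Continuous Ge := gecont.comp Real.continuous_sqrt
  have hGocont : Continuous Go := hkcont.comp Real.continuous_sqrt
  set T := R^2 + 1 with hT
  have hsqrtT : ∀ t, T ≤ t → R < Real.sqrt t := by
    intro t ht
    have h1 : Real.sqrt (R^2+1) ≤ Real.sqrt t := Real.sqrt_le_sqrt (by rw [hT] at ht; linarith)
    have h2 : R < Real.sqrt (R^2+1) := by
      have := Real.sqrt_lt_sqrt (sq_nonneg R) (by linarith : R^2 < R^2+1)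
      rwa [Real.sqrt_sq (le_of_lt hRpos)] at this
    linarith
  have hGevanish : ∀ t, T ≤ t → Ge t = 0 := by
    intro t ht
    apply hgevanish
    rw [abs_of_nonneg (Real.sqrt_nonneg t)]
    exact le_of_lt (hsqrtT t ht)
  have hGovanish : ∀ t, T ≤ t → Go t = 0 := by
    intro t ht
    have h1 := hsqrtT t ht
    have h2 : Real.sqrt t ≠ 0 := ne_of_gt (lt_trans hRpos h1)
    have h3 : go (Real.sqrt t) = 0 := by
      apply hgovanish
      rw [abs_of_nonneg (Real.sqrt_nonneg t)]
      exact le_of_lt h1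
    simp [hGo, hk, h2, h3]
  set CK := (K+1)/K with hCKdef
  have hCKpos : 0 < CK := by positivity
  set ε₁ := ε / (2 * (1 + CK)) with hε₁
  have hε₁pos : 0 < ε₁ := by positivity
  obtain ⟨qe, hqe⟩ := substW hK Ge hGecont T hGevanish hε₁pos
  obtain ⟨qo, hqo⟩ := substW hK Go hGocont T hGovanish hε₁pos
  set A : ℝ → ℝ := fun x => Real.exp (-(K*x^2)) * qe.eval (Real.exp (-(K*x^2)))
    + Real.exp (-(K*x^2)) * qo.eval (Real.exp (-(K*x^2))) * x with hA
  have hAmem : A ∈ Apx K := by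
    apply apx_congr ?_ (apx_add (apx_weighted hK qe 1) (apx_weighted hK qo Polynomial.X))
    intro x
    simp [hA]
  obtain ⟨P, hP⟩ := hAmem (ε/2) (by linarith)
  refine ⟨P, fun x => ?_⟩
  -- decomposition of g
  have hGex : Ge (x^2) = ge x := by
    rw [hGe]
    simp only []
    rw [Real.sqrt_sq_eq_abs]
    rcases abs_cases x with ⟨h, _⟩ | ⟨h, _⟩
    · rw [h]
    · rw [h, hgeeven]
  have hGox : Go (x^2) * x = go x := by
    rw [hGo]
    simp only []
    rw [Real.sqrt_sq_eq_abs]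
    by_cases hx0 : x = 0
    · subst hx0; simpa using hgo0.symm
    · have habs0 : |x| ≠ 0 := abs_ne_zero.mpr hx0
      rw [hk]
      simp only [if_neg habs0]
      rcases abs_cases x with ⟨h, _⟩ | ⟨h, _⟩
      · rw [h]; field_simp
      · rw [h, hgoodd]
        field_simp
  have hgid : g x = Ge (x^2) + Go (x^2) * x := by
    rw [hGex, hGox, hge, hgo]
    simp only []
    ring
  -- bounds
  have ht0 : (0:ℝ) ≤ x^2 := sq_nonneg x
  have he := hqe (x^2) ht0
  have ho := hqo (x^2) ht0
  have hPexp : (0:ℝ) < Real.exp (-(K*x^2)) := Real.exp_pos _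
  have hexple : Real.exp (-(K*x^2)) ≤ 1 := Real.exp_le_one_iff.mpr (by nlinarith)
  have habsx : |x| * Real.exp (-(K*x^2)) ≤ CK := by
    rw [hCKdef, le_div_iff₀ hK]
    have h1 : |x| ≤ 1 + x^2 := by nlinarith [sq_abs x, sq_nonneg (|x| - 1), abs_nonneg x]
    have hE : Real.exp (-(K*x^2)) * Real.exp (K*x^2) = 1 := by
      rw [← Real.exp_add]; simp
    have h4 : x^2 * K ≤ Real.exp (K*x^2) := by nlinarith [Real.add_one_le_exp (K*x^2)]
    calc |x| * Real.exp (-(K*x^2)) * K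
        ≤ (1 + x^2) * Real.exp (-(K*x^2)) * K := by
          apply mul_le_mul_of_nonneg_right
            (mul_le_mul_of_nonneg_right h1 (le_of_lt hPexp)) (le_of_lt hK)
      _ = Real.exp (-(K*x^2)) * K + (x^2 * K) * Real.exp (-(K*x^2)) := by ring
      _ ≤ 1 * K + Real.exp (K*x^2) * Real.exp (-(K*x^2)) :=
          add_le_add (mul_le_mul_of_nonneg_right hexple (le_of_lt hK))
            (mul_le_mul_of_nonneg_right h4 (le_of_lt hPexp))
      _ = K + 1 := by rw [one_mul, mul_comm, hE]
  have hAg : |A x - g x| ≤ ε/2 := by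
    rw [hgid, hA]
    simp only []
    have e1 : Real.exp (-(K*x^2)) * qe.eval (Real.exp (-(K*x^2)))
        + Real.exp (-(K*x^2)) * qo.eval (Real.exp (-(K*x^2))) * x
        - (Ge (x^2) + Go (x^2) * x)
        = (Real.exp (-(K*x^2)) * qe.eval (Real.exp (-(K*x^2))) - Ge (x^2))
          + (Real.exp (-(K*x^2)) * qo.eval (Real.exp (-(K*x^2))) - Go (x^2)) * x := by ring
    rw [e1]
    calc |(Real.exp (-(K*x^2)) * qe.eval (Real.exp (-(K*x^2))) - Ge (x^2))
          + (Real.exp (-(K*x^2)) * qo.eval (Real.exp (-(K*x^2))) - Go (x^2)) * x|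
        ≤ |Real.exp (-(K*x^2)) * qe.eval (Real.exp (-(K*x^2))) - Ge (x^2)|
          + |Real.exp (-(K*x^2)) * qo.eval (Real.exp (-(K*x^2))) - Go (x^2)| * |x| := by
          rw [← abs_mul]; exact abs_add_le _ _
      _ ≤ ε₁ * Real.exp (-(K*x^2)) + (ε₁ * Real.exp (-(K*x^2))) * |x| := by
          apply _root_.add_le_add he
          exact mul_le_mul_of_nonneg_right ho (abs_nonneg x)
      _ ≤ ε₁ * 1 + ε₁ * CK := by
          apply _root_.add_le_add
          · exact mul_le_mul_of_nonneg_left hexple (le_of_lt hε₁pos)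
          · rw [mul_assoc]
            apply mul_le_mul_of_nonneg_left _ (le_of_lt hε₁pos)
            rw [mul_comm]
            exact habsx
      _ = ε₁ * (1 + CK) := by ring
      _ = ε/2 := by
          rw [hε₁]
          field_simp
  calc |(fun x : ℝ => Real.exp (-K * x ^ 2)) x * P.eval x - g x|
      = |Real.exp (-K*x^2) * P.eval x - g x| := rfl
    _ ≤ |Real.exp (-K*x^2) * P.eval x - A x| + |A x - g x| := abs_sub_le _ _ _
    _ ≤ ε/2 + ε/2 := add_le_add (hP x) hAg
    _ = ε := by ring
end
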